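/- Suppose P : ℝ → ℝ satisfies P(z) ≥ p₀ > 0 for all z ≥ 0, and suppose 2D grid-function sequences (U^n)_{n=0}^{N+1}, (V^n)_{n=0}^{N+1} in W_h satisfy the 2D fully discrete compact scheme with zero source: for all 1 ≤ n ≤ N and interior indices (i,j), ℋδ_t⁽²⁾U_{ij}^n + P(‖V^n‖_F²)·ℋδ̄_tU_{ij}^n + ΦṼ_{ij}^n = 0 and ℋδ̄_tV_{ij}^n = Φδ̄_tU_{ij}^n. Then the discrete energy Ě^n := √(‖ℋδ_tU^{n+1}‖² + (1/2)(‖ℋV^{n+1}‖² + ‖ℋV^n‖²)) satisfies 0 ≤ Ě^n ≤ Ě^0 for all 1 ≤ n ≤ N. -/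

import Mathlib

open Finset

noncomputable section

/-- spatial mesh size `1/(2J)` -/
def msh (J : ℕ) : ℝ := 1 / (2 * (J : ℝ))

/-- 2D discrete inner product -/
def gridIP2 (J₁ J₂ : ℕ) (ω ν : ℕ → ℕ → ℝ) : ℝ :=
  msh J₁ * msh J₂ *
    ∑ i ∈ Finset.Icc 1 (2 * J₁ - 1), ∑ j ∈ Finset.Icc 1 (2 * J₂ - 1), ω i j * ν i j

/-- 2D discrete `L²` norm -/
def gridNorm2 (J₁ J₂ : ℕ) (ω : ℕ → ℕ → ℝ) : ℝ :=
  Real.sqrt (gridIP2 J₁ J₂ ω ω)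

/-- the 2D norm `‖ω‖_E` -/
def gridNormE (J₁ J₂ : ℕ) (ω : ℕ → ℕ → ℝ) : ℝ :=
  2 / 3 * Real.sqrt (msh J₁ * msh J₂ *
    ∑ i ∈ Finset.Icc 1 J₁, ∑ j ∈ Finset.Icc 1 J₂,
      (ω (2 * i - 2) (2 * j - 1) ^ 2 + ω (2 * i - 1) (2 * j - 2) ^ 2
        + 3 * ω (2 * i - 1) (2 * j - 1) ^ 2))

/-- the 2D norm `‖ω‖_F = √((4/9)‖ω‖² + ‖ω‖_E²)` -/
def gridNormF (J₁ J₂ : ℕ) (ω : ℕ → ℕ → ℝ) : ℝ :=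
  Real.sqrt (4 / 9 * gridNorm2 J₁ J₂ ω ^ 2 + gridNormE J₁ J₂ ω ^ 2)

/-- compact operator `𝒜` in the `x`-direction (interior formula) -/
def cA2 (ω : ℕ → ℕ → ℝ) (i j : ℕ) : ℝ := (ω (i + 1) j + 10 * ω i j + ω (i - 1) j) / 12

/-- compact operator `ℬ` in the `y`-direction (interior formula) -/
def cB2 (ω : ℕ → ℕ → ℝ) (i j : ℕ) : ℝ := (ω i (j + 1) + 10 * ω i j + ω i (j - 1)) / 12

/-- compact operator `ℋ = 𝒜ℬ` -/
def cH (ω : ℕ → ℕ → ℝ) : ℕ → ℕ → ℝ := cA2 (cB2 ω)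

/-- second difference `δ_xδ_x̄` -/
def dxx2 (J₁ : ℕ) (ω : ℕ → ℕ → ℝ) (i j : ℕ) : ℝ :=
  (ω (i + 1) j - 2 * ω i j + ω (i - 1) j) / msh J₁ ^ 2

/-- second difference `δ_yδ_ȳ` -/
def dyy2 (J₂ : ℕ) (ω : ℕ → ℕ → ℝ) (i j : ℕ) : ℝ :=
  (ω i (j + 1) - 2 * ω i j + ω i (j - 1)) / msh J₂ ^ 2

/-- compact discrete Laplacian `Φ = ℬδ_xδ_x̄ + 𝒜δ_yδ_ȳ` -/
def cPhi (J₁ J₂ : ℕ) (ω : ℕ → ℕ → ℝ) (i j : ℕ) : ℝ :=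
  cB2 (dxx2 J₁ ω) i j + cA2 (dyy2 J₂ ω) i j

/-- membership in `W_h`: vanishing on the boundary indices -/
def memWh (J₁ J₂ : ℕ) (ω : ℕ → ℕ → ℝ) : Prop :=
  ∀ i j : ℕ, (i = 0 ∨ i = 2 * J₁ ∨ j = 0 ∨ j = 2 * J₂) → ω i j = 0

/-- the discrete energy `Ě^n = √(‖ℋδ_t U^{n+1}‖² + (1/2)(‖ℋV^{n+1}‖² + ‖ℋV^n‖²))` -/
def energyE2 (J₁ J₂ : ℕ) (τ : ℝ) (U V : ℕ → ℕ → ℕ → ℝ) (n : ℕ) : ℝ :=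
  Real.sqrt (gridNorm2 J₁ J₂ (cH fun i j => (U (n + 1) i j - U n i j) / τ) ^ 2
    + 1 / 2 * (gridNorm2 J₁ J₂ (cH (V (n + 1))) ^ 2 + gridNorm2 J₁ J₂ (cH (V n)) ^ 2))

/-!
Testing the first equation of the scheme with `ℋδ̄_tUⁿ = (ℋδ_tUⁿ⁺¹ + ℋδ_tUⁿ)/2`, and using
`ℋδ_t⁽²⁾Uⁿ = (ℋδ_tUⁿ⁺¹ - ℋδ_tUⁿ)/τ`, produces the change of the kinetic part of the energy plus
the nonnegative damping term `P ‖ℋδ̄_tUⁿ‖²`. The coupling term `(ΦṼⁿ, ℋδ̄_tUⁿ)` equals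
`(ℋṼⁿ, Φδ̄_tUⁿ) = (ℋṼⁿ, ℋδ̄_tVⁿ)` by the second equation, i.e. the change of the potential part.
So `(Ěⁿ)² - (Ěⁿ⁻¹)² = -2τP ‖ℋδ̄_tUⁿ‖² ≤ 0`.

`Φ` and `ℋ` may be exchanged because `ℋ = 𝒜ℬ = ℬ𝒜` and `Φ = ℬδ_xδ_x̄ + 𝒜δ_yδ_ȳ`: stencils in
different directions commute, and two symmetric three-point stencils in the same direction can be
swapped in the discrete inner product of grid functions vanishing at both ends of that direction.
-/

theorem sum_Icc_neighborSum_mul_comm (M : ℕ) (f g : ℕ → ℝ) (hf₀ : f 0 = 0) (hfM : f M = 0)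
    (hg₀ : g 0 = 0) (hgM : g M = 0) :
    ∑ i ∈ Icc 1 (M - 1), (f (i + 1) + f (i - 1)) * g i
      = ∑ i ∈ Icc 1 (M - 1), f i * (g (i + 1) + g (i - 1)) := by
  rcases lt_or_ge M 2 with hM | hM
  · rw [Icc_eq_empty (by omega), sum_empty, sum_empty]
  -- summation by parts: the difference telescopes through the flux `f i g (i-1) - f (i-1) g i`
  set T : ℕ → ℝ := fun i => f i * g (i - 1) - f (i - 1) * g i
  have hT : ∀ i ∈ Icc 1 (M - 1),
      (f (i + 1) + f (i - 1)) * g i - f i * (g (i + 1) + g (i - 1)) = T (i + 1) - T i := by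
    intro i _
    simp only [T, Nat.add_sub_cancel]
    ring
  rw [← sub_eq_zero, ← sum_sub_distrib, sum_congr rfl hT, sum_Icc_sub (by omega),
    Nat.sub_add_cancel (by omega)]
  simp [T, hf₀, hfM, hg₀, hgM]

theorem sum_Icc_stencil_mul_stencil_comm (M : ℕ) (a b c d : ℝ) (f g : ℕ → ℝ) (hf₀ : f 0 = 0)
    (hfM : f M = 0) (hg₀ : g 0 = 0) (hgM : g M = 0) :
    ∑ i ∈ Icc 1 (M - 1), (a * (f (i + 1) + f (i - 1)) + b * f i)
        * (c * (g (i + 1) + g (i - 1)) + d * g i)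
      = ∑ i ∈ Icc 1 (M - 1), (c * (f (i + 1) + f (i - 1)) + d * f i)
        * (a * (g (i + 1) + g (i - 1)) + b * g i) := by
  have h : ∀ i ∈ Icc 1 (M - 1),
      (a * (f (i + 1) + f (i - 1)) + b * f i) * (c * (g (i + 1) + g (i - 1)) + d * g i)
        - (c * (f (i + 1) + f (i - 1)) + d * f i) * (a * (g (i + 1) + g (i - 1)) + b * g i)
      = (a * d - b * c) * ((f (i + 1) + f (i - 1)) * g i - f i * (g (i + 1) + g (i - 1))) :=
    fun i _ => by ring
  rw [← sub_eq_zero, ← sum_sub_distrib, sum_congr rfl h, ← mul_sum, sum_sub_distrib,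
    sum_Icc_neighborSum_mul_comm M f g hf₀ hfM hg₀ hgM, sub_self, mul_zero]

def ZeroOnXEdges (J₁ : ℕ) (ω : ℕ → ℕ → ℝ) : Prop :=
  ∀ j, ω 0 j = 0 ∧ ω (2 * J₁) j = 0

def ZeroOnYEdges (J₂ : ℕ) (ω : ℕ → ℕ → ℝ) : Prop :=
  ∀ i, ω i 0 = 0 ∧ ω i (2 * J₂) = 0

section Grid

variable {J₁ J₂ : ℕ} {ω f g : ℕ → ℕ → ℝ}

theorem memWh.zeroOnXEdges (h : memWh J₁ J₂ ω) : ZeroOnXEdges J₁ ω :=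
  fun j => ⟨h 0 j (by simp), h _ j (by simp)⟩

theorem memWh.zeroOnYEdges (h : memWh J₁ J₂ ω) : ZeroOnYEdges J₂ ω :=
  fun i => ⟨h i 0 (by simp), h i _ (by simp)⟩

theorem ZeroOnXEdges.cB2 (h : ZeroOnXEdges J₁ ω) : ZeroOnXEdges J₁ (cB2 ω) :=
  fun j => by simp [_root_.cB2, (h _).1, (h _).2]

theorem ZeroOnYEdges.cA2 (h : ZeroOnYEdges J₂ ω) : ZeroOnYEdges J₂ (cA2 ω) :=
  fun i => by simp [_root_.cA2, (h _).1, (h _).2]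

theorem cB2_dxx2 : cB2 (dxx2 J₁ ω) = dxx2 J₁ (cB2 ω) := by
  funext i j; simp only [cB2, dxx2]; ring

theorem cA2_dyy2 : cA2 (dyy2 J₂ ω) = dyy2 J₂ (cA2 ω) := by
  funext i j; simp only [cA2, dyy2]; ring

theorem cH_eq_cB2_cA2 : cH ω = cB2 (cA2 ω) := by
  funext i j; simp only [cH, cA2, cB2]; ring

theorem gridIP2_dxx2_cA2 (hf : ZeroOnXEdges J₁ f) (hg : ZeroOnXEdges J₁ g) :
    gridIP2 J₁ J₂ (dxx2 J₁ f) (cA2 g) = gridIP2 J₁ J₂ (cA2 f) (dxx2 J₁ g) := by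
  unfold gridIP2
  rw [sum_comm, sum_comm (s := Icc 1 (2 * J₁ - 1))]
  congr 1
  refine sum_congr rfl fun j _ => ?_
  have := sum_Icc_stencil_mul_stencil_comm (2 * J₁) (1 / msh J₁ ^ 2) (-2 / msh J₁ ^ 2)
    (1 / 12) (10 / 12) (fun i => f i j) (fun i => g i j) (hf j).1 (hf j).2 (hg j).1 (hg j).2
  convert this using 3 with i <;> simp only [dxx2, cA2] <;> ring

theorem gridIP2_dyy2_cB2 (hf : ZeroOnYEdges J₂ f) (hg : ZeroOnYEdges J₂ g) :
    gridIP2 J₁ J₂ (dyy2 J₂ f) (cB2 g) = gridIP2 J₁ J₂ (cB2 f) (dyy2 J₂ g) := by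
  unfold gridIP2
  congr 1
  refine sum_congr rfl fun i _ => ?_
  have := sum_Icc_stencil_mul_stencil_comm (2 * J₂) (1 / msh J₂ ^ 2) (-2 / msh J₂ ^ 2)
    (1 / 12) (10 / 12) (fun j => f i j) (fun j => g i j) (hf i).1 (hf i).2 (hg i).1 (hg i).2
  convert this using 3 with j <;> simp only [dyy2, cB2] <;> ring

end Grid

section InnerProduct

variable {J₁ J₂ : ℕ} {f f' g g' : ℕ → ℕ → ℝ}

theorem gridIP2_comm : gridIP2 J₁ J₂ f g = gridIP2 J₁ J₂ g f := by
  simp only [gridIP2, mul_comm (f _ _)]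

theorem gridIP2_add_left : gridIP2 J₁ J₂ (f + f') g = gridIP2 J₁ J₂ f g + gridIP2 J₁ J₂ f' g := by
  simp only [gridIP2, Pi.add_apply, add_mul, sum_add_distrib, mul_add]

theorem gridIP2_add_right : gridIP2 J₁ J₂ f (g + g') = gridIP2 J₁ J₂ f g + gridIP2 J₁ J₂ f g' := by
  rw [gridIP2_comm, gridIP2_add_left, gridIP2_comm, gridIP2_comm (f := g')]

theorem gridIP2_smul_left (c : ℝ) : gridIP2 J₁ J₂ (c • f) g = c * gridIP2 J₁ J₂ f g := by
  simp only [gridIP2, Pi.smul_apply, smul_eq_mul, mul_assoc, ← mul_sum]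
  ring

theorem gridIP2_smul_right (c : ℝ) : gridIP2 J₁ J₂ f (c • g) = c * gridIP2 J₁ J₂ f g := by
  rw [gridIP2_comm, gridIP2_smul_left, gridIP2_comm]

theorem gridIP2_sub_add : gridIP2 J₁ J₂ (f - g) (f + g) = gridIP2 J₁ J₂ f f - gridIP2 J₁ J₂ g g := by
  simp only [gridIP2, Pi.sub_apply, Pi.add_apply, ← mul_sub, ← sum_sub_distrib]
  congr 1
  exact sum_congr rfl fun i _ => sum_congr rfl fun j _ => by ring

theorem gridIP2_congr_left
    (h : ∀ i ∈ Icc 1 (2 * J₁ - 1), ∀ j ∈ Icc 1 (2 * J₂ - 1), f i j = f' i j) :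
    gridIP2 J₁ J₂ f g = gridIP2 J₁ J₂ f' g := by
  unfold gridIP2
  congr 1
  exact sum_congr rfl fun i hi => sum_congr rfl fun j hj => by rw [h i hi j hj]

theorem gridIP2_congr_right
    (h : ∀ i ∈ Icc 1 (2 * J₁ - 1), ∀ j ∈ Icc 1 (2 * J₂ - 1), g i j = g' i j) :
    gridIP2 J₁ J₂ f g = gridIP2 J₁ J₂ f g' := by
  rw [gridIP2_comm, gridIP2_congr_left h, gridIP2_comm]

theorem gridIP2_self_nonneg : 0 ≤ gridIP2 J₁ J₂ f f := by
  unfold gridIP2 msh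
  have := sum_nonneg fun i (_ : i ∈ Icc 1 (2 * J₁ - 1)) =>
    sum_nonneg fun j (_ : j ∈ Icc 1 (2 * J₂ - 1)) => mul_self_nonneg (f i j)
  positivity

theorem gridNorm2_sq : gridNorm2 J₁ J₂ f ^ 2 = gridIP2 J₁ J₂ f f :=
  Real.sq_sqrt gridIP2_self_nonneg

end InnerProduct

theorem gridIP2_cPhi_cH {J₁ J₂ : ℕ} {p q : ℕ → ℕ → ℝ} (hp : memWh J₁ J₂ p)
    (hq : memWh J₁ J₂ q) :
    gridIP2 J₁ J₂ (cPhi J₁ J₂ p) (cH q) = gridIP2 J₁ J₂ (cH p) (cPhi J₁ J₂ q) := by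
  have hx : gridIP2 J₁ J₂ (cB2 (dxx2 J₁ p)) (cH q) = gridIP2 J₁ J₂ (cH p) (cB2 (dxx2 J₁ q)) := by
    rw [cB2_dxx2, cB2_dxx2]
    exact gridIP2_dxx2_cA2 hp.zeroOnXEdges.cB2 hq.zeroOnXEdges.cB2
  have hy : gridIP2 J₁ J₂ (cA2 (dyy2 J₂ p)) (cH q) = gridIP2 J₁ J₂ (cH p) (cA2 (dyy2 J₂ q)) := by
    rw [cA2_dyy2, cA2_dyy2, cH_eq_cB2_cA2, cH_eq_cB2_cA2]
    exact gridIP2_dyy2_cB2 hp.zeroOnYEdges.cA2 hq.zeroOnYEdges.cA2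
  calc gridIP2 J₁ J₂ (cPhi J₁ J₂ p) (cH q)
      = gridIP2 J₁ J₂ (cB2 (dxx2 J₁ p) + cA2 (dyy2 J₂ p)) (cH q) := rfl
    _ = gridIP2 J₁ J₂ (cH p) (cB2 (dxx2 J₁ q) + cA2 (dyy2 J₂ q)) := by
      rw [gridIP2_add_left, gridIP2_add_right, hx, hy]

def discreteEnergySq (J₁ J₂ : ℕ) (τ : ℝ) (u₀ u₁ v₀ v₁ : ℕ → ℕ → ℝ) : ℝ :=
  gridNorm2 J₁ J₂ (cH fun i j => (u₁ i j - u₀ i j) / τ) ^ 2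
    + 1 / 2 * (gridNorm2 J₁ J₂ (cH v₁) ^ 2 + gridNorm2 J₁ J₂ (cH v₀) ^ 2)

theorem energyE2_eq_sqrt (J₁ J₂ : ℕ) (τ : ℝ) (U V : ℕ → ℕ → ℕ → ℝ) (n : ℕ) :
    energyE2 J₁ J₂ τ U V n
      = √(discreteEnergySq J₁ J₂ τ (U n) (U (n + 1)) (V n) (V (n + 1))) :=
  rfl

theorem discreteEnergySq_eq_sub {J₁ J₂ : ℕ} {τ c : ℝ} (hτ : τ ≠ 0)
    {u₀ u₁ u₂ v₀ v₁ v₂ : ℕ → ℕ → ℝ} (hu₀ : memWh J₁ J₂ u₀) (hu₂ : memWh J₁ J₂ u₂)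
    (hv₀ : memWh J₁ J₂ v₀) (hv₂ : memWh J₁ J₂ v₂)
    (h₁ : ∀ i ∈ Icc 1 (2 * J₁ - 1), ∀ j ∈ Icc 1 (2 * J₂ - 1),
      cH (fun a b => (u₂ a b - 2 * u₁ a b + u₀ a b) / τ ^ 2) i j
          + c * cH (fun a b => (u₂ a b - u₀ a b) / (2 * τ)) i j
          + cPhi J₁ J₂ (fun a b => (v₂ a b + v₀ a b) / 2) i j = 0)
    (h₂ : ∀ i ∈ Icc 1 (2 * J₁ - 1), ∀ j ∈ Icc 1 (2 * J₂ - 1),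
      cH (fun a b => (v₂ a b - v₀ a b) / (2 * τ)) i j
        = cPhi J₁ J₂ (fun a b => (u₂ a b - u₀ a b) / (2 * τ)) i j) :
    discreteEnergySq J₁ J₂ τ u₁ u₂ v₁ v₂
      = discreteEnergySq J₁ J₂ τ u₀ u₁ v₀ v₁
        - 2 * τ * c * gridNorm2 J₁ J₂ (cH fun a b => (u₂ a b - u₀ a b) / (2 * τ)) ^ 2 := by
  simp only [discreteEnergySq, gridNorm2_sq]
  set x := cH fun i j => (u₂ i j - u₁ i j) / τ
  set y := cH fun i j => (u₁ i j - u₀ i j) / τ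
  set B := cH fun a b => (u₂ a b - u₀ a b) / (2 * τ)
  set vAvg := fun a b => (v₂ a b + v₀ a b) / 2
  have hA : cH (fun a b => (u₂ a b - 2 * u₁ a b + u₀ a b) / τ ^ 2) = τ⁻¹ • (x - y) := by
    funext i j
    simp only [x, y, cH, cA2, cB2, Pi.smul_apply, Pi.sub_apply, smul_eq_mul]
    field_simp
    ring
  have hB : B = (1 / 2 : ℝ) • (x + y) := by
    funext i j
    simp only [B, x, y, cH, cA2, cB2, Pi.smul_apply, Pi.add_apply, smul_eq_mul]
    field_simp
    ring
  have hvAvg : cH vAvg = (1 / 2 : ℝ) • (cH v₂ + cH v₀) := by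
    funext i j
    simp only [vAvg, cH, cA2, cB2, Pi.smul_apply, Pi.add_apply, smul_eq_mul]
    ring
  have hδv : cH (fun a b => (v₂ a b - v₀ a b) / (2 * τ)) = (2 * τ)⁻¹ • (cH v₂ - cH v₀) := by
    funext i j
    simp only [cH, cA2, cB2, Pi.smul_apply, Pi.sub_apply, smul_eq_mul]
    field_simp
    ring
  have tested : gridIP2 J₁ J₂ (cH fun a b => (u₂ a b - 2 * u₁ a b + u₀ a b) / τ ^ 2) B
      + c * gridIP2 J₁ J₂ B B + gridIP2 J₁ J₂ (cPhi J₁ J₂ vAvg) B = 0 := by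
    rw [← gridIP2_smul_left, ← gridIP2_add_left, ← gridIP2_add_left, ← zero_mul (gridIP2 J₁ J₂ 0 B),
      ← gridIP2_smul_left]
    exact gridIP2_congr_left fun i hi j hj => by simpa using h₁ i hi j hj
  have kinetic : gridIP2 J₁ J₂ (cH fun a b => (u₂ a b - 2 * u₁ a b + u₀ a b) / τ ^ 2) B
      = (gridIP2 J₁ J₂ x x - gridIP2 J₁ J₂ y y) / (2 * τ) := by
    rw [hA, hB, gridIP2_smul_left, gridIP2_smul_right, gridIP2_sub_add]
    field_simp
  have potential : gridIP2 J₁ J₂ (cPhi J₁ J₂ vAvg) B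
      = (gridIP2 J₁ J₂ (cH v₂) (cH v₂) - gridIP2 J₁ J₂ (cH v₀) (cH v₀)) / (4 * τ) := by
    have hvAvgW : memWh J₁ J₂ vAvg := fun i j h => by simp [vAvg, hv₂ i j h, hv₀ i j h]
    have hδuW : memWh J₁ J₂ fun a b => (u₂ a b - u₀ a b) / (2 * τ) :=
      fun i j h => by simp [hu₂ i j h, hu₀ i j h]
    rw [gridIP2_cPhi_cH hvAvgW hδuW, ← gridIP2_congr_right h₂, hvAvg, hδv, gridIP2_smul_left,
      gridIP2_smul_right, gridIP2_comm, gridIP2_sub_add]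
    field_simp
    ring
  rw [kinetic, potential] at tested
  field_simp at tested
  linear_combination tested / 4

theorem stmt_18_general (J₁ J₂ N : ℕ)
    (τ : ℝ) (hτ : 0 < τ)
    (p₀ : ℝ) (hp₀ : 0 < p₀) (P : ℝ → ℝ) (hP : ∀ z : ℝ, 0 ≤ z → p₀ ≤ P z)
    (U V : ℕ → ℕ → ℕ → ℝ)
    (hUbc : ∀ n, memWh J₁ J₂ (U n)) (hVbc : ∀ n, memWh J₁ J₂ (V n))
    (hs1 : ∀ n ∈ Finset.Icc 1 N, ∀ i ∈ Finset.Icc 1 (2 * J₁ - 1),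
      ∀ j ∈ Finset.Icc 1 (2 * J₂ - 1),
      cH (fun a b => (U (n + 1) a b - 2 * U n a b + U (n - 1) a b) / τ ^ 2) i j
          + P (gridNormF J₁ J₂ (V n) ^ 2)
              * cH (fun a b => (U (n + 1) a b - U (n - 1) a b) / (2 * τ)) i j
          + cPhi J₁ J₂ (fun a b => (V (n + 1) a b + V (n - 1) a b) / 2) i j
        = 0)
    (hs2 : ∀ n ∈ Finset.Icc 1 N, ∀ i ∈ Finset.Icc 1 (2 * J₁ - 1),
      ∀ j ∈ Finset.Icc 1 (2 * J₂ - 1),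
      cH (fun a b => (V (n + 1) a b - V (n - 1) a b) / (2 * τ)) i j
        = cPhi J₁ J₂ (fun a b => (U (n + 1) a b - U (n - 1) a b) / (2 * τ)) i j) :
    ∀ n ∈ Finset.Icc 1 N,
      0 ≤ energyE2 J₁ J₂ τ U V n ∧ energyE2 J₁ J₂ τ U V n ≤ energyE2 J₁ J₂ τ U V 0 := by
  let E n := discreteEnergySq J₁ J₂ τ (U n) (U (n + 1)) (V n) (V (n + 1))
  have step : ∀ m < N, E (m + 1) ≤ E m := by
    intro m hm
    have hm' : m + 1 ∈ Icc 1 N := mem_Icc.2 ⟨by omega, hm⟩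
    have h₁ := hs1 (m + 1) hm'
    have h₂ := hs2 (m + 1) hm'
    simp only [Nat.add_sub_cancel] at h₁ h₂
    have hc : 0 ≤ P (gridNormF J₁ J₂ (V (m + 1)) ^ 2) := hp₀.le.trans (hP _ (sq_nonneg _))
    simp only [E, discreteEnergySq_eq_sub hτ.ne' (hUbc m) (hUbc (m + 1 + 1)) (hVbc m)
      (hVbc (m + 1 + 1)) h₁ h₂, sub_le_self_iff]
    positivity
  have decay : ∀ m ≤ N, E m ≤ E 0 := by
    intro m
    induction m with
    | zero => exact fun _ => le_rfl
    | succ m ih => exact fun hm => (step m hm).trans (ih (Nat.le_of_succ_le hm))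
  intro n hn
  rw [energyE2_eq_sqrt, energyE2_eq_sqrt]
  exact ⟨Real.sqrt_nonneg _, Real.sqrt_le_sqrt (decay n (mem_Icc.1 hn).2)⟩

/-- energy dissipation of the 2D fully discrete compact scheme
(Corollary 4.1). -/
theorem stmt_18 (J₁ J₂ N : ℕ) (hJ₁ : 0 < J₁) (hJ₂ : 0 < J₂) (hN : 0 < N)
    (τ : ℝ) (hτ : 0 < τ)
    (p₀ : ℝ) (hp₀ : 0 < p₀) (P : ℝ → ℝ) (hP : ∀ z : ℝ, 0 ≤ z → p₀ ≤ P z)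
    (U V : ℕ → ℕ → ℕ → ℝ)
    (hUbc : ∀ n, memWh J₁ J₂ (U n)) (hVbc : ∀ n, memWh J₁ J₂ (V n))
    (hs1 : ∀ n ∈ Finset.Icc 1 N, ∀ i ∈ Finset.Icc 1 (2 * J₁ - 1),
      ∀ j ∈ Finset.Icc 1 (2 * J₂ - 1),
      cH (fun a b => (U (n + 1) a b - 2 * U n a b + U (n - 1) a b) / τ ^ 2) i j
          + P (gridNormF J₁ J₂ (V n) ^ 2)
              * cH (fun a b => (U (n + 1) a b - U (n - 1) a b) / (2 * τ)) i j
          + cPhi J₁ J₂ (fun a b => (V (n + 1) a b + V (n - 1) a b) / 2) i j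
        = 0)
    (hs2 : ∀ n ∈ Finset.Icc 1 N, ∀ i ∈ Finset.Icc 1 (2 * J₁ - 1),
      ∀ j ∈ Finset.Icc 1 (2 * J₂ - 1),
      cH (fun a b => (V (n + 1) a b - V (n - 1) a b) / (2 * τ)) i j
        = cPhi J₁ J₂ (fun a b => (U (n + 1) a b - U (n - 1) a b) / (2 * τ)) i j) :
    ∀ n ∈ Finset.Icc 1 N,
      0 ≤ energyE2 J₁ J₂ τ U V n ∧ energyE2 J₁ J₂ τ U V n ≤ energyE2 J₁ J₂ τ U V 0 :=
  stmt_18_general J₁ J₂ N τ hτ p₀ hp₀ P hP U V hUbc hVbc hs1 hs2
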